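/- arXiv:2205.12251 — 2 statements merged into one kernel-verified Lean document; each statement's English description precedes it below -/
import Mathlib

section
/- The unnormalized zero-flux toric code ground state Φ = (∏_v (1/2)(1 + B_v)) δ₀ satisfies: Φ ≠ 0; A_{(x,y)} Φ = Φ for every plaquette (x,y); B_{(x,y)} Φ = Φ for every star (x,y); W_{Γ_x} Φ = Φ for every column x; and W_{Γ^h_y} Φ = Φ for every row y. In particular Φ is a ground state of the toric code Hamiltonian with trivial Wilson loop quantum numbers. -/
open Finset

noncomputable section

/-- The Hilbert space of qubits at the elements of `ι`. -/
abbrev QubitSpace (ι : Type*) := (ι → ZMod 2) → ℂ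

/-- Indicator function of a finset, valued in `ZMod 2`. -/
def indicZ2 {ι : Type*} [DecidableEq ι] (S : Finset ι) : ι → ZMod 2 :=
  fun b => if b ∈ S then 1 else 0

/-- The Z-type operator `W_S`. -/
def Wop {ι : Type*} [DecidableEq ι] (S : Finset ι) :
    Module.End ℂ (QubitSpace ι) where
  toFun ψ := fun σ => (-1 : ℂ) ^ (∑ b ∈ S, σ b).val * ψ σ
  map_add' ψ φ := by funext σ; simp [mul_add]
  map_smul' c ψ := by funext σ; simp; ring

/-- The X-type operator `V_S`. -/
def Vop {ι : Type*} [DecidableEq ι] (S : Finset ι) :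
    Module.End ℂ (QubitSpace ι) where
  toFun ψ := fun σ => ψ (σ + indicZ2 S)
  map_add' _ _ := rfl
  map_smul' _ _ := rfl

/-- The inner product `⟨ψ, φ⟩ = ∑_σ conj (ψ σ) · φ σ`. -/
def qInner {ι : Type*} [Fintype ι] [DecidableEq ι] (ψ φ : QubitSpace ι) : ℂ :=
  ∑ σ, (starRingEnd ℂ) (ψ σ) * φ σ

/-- Square root of an involution: `W^{1/2} = (1/2)(1+W) + (i/2)(1−W)`. -/
def sqrtInv {E : Type*} [AddCommGroup E] [Module ℂ E] (W : Module.End ℂ E) :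
    Module.End ℂ E :=
  ((2 : ℂ)⁻¹) • (1 + W) + (Complex.I * (2 : ℂ)⁻¹) • (1 - W)

/-- `W^{a/2}` for `a ∈ {0,1}`: the identity if `a = 0`, `W^{1/2}` if `a = 1`. -/
def halfPow {E : Type*} [AddCommGroup E] [Module ℂ E] (W : Module.End ℂ E)
    (a : ℕ) : Module.End ℂ E :=
  if a = 0 then 1 else sqrtInv W

/-- The post-strategy state `ψ' = (∏_j W_{Γ_j}^{a_j/2}) ψ` (the factors are
commuting diagonal operators, so the order of the product is immaterial). -/
def postState {ι : Type*} [DecidableEq ι] {T : ℕ} (Γ : Fin T → Finset ι)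
    (a : Fin T → ℕ) (ψ : QubitSpace ι) : QubitSpace ι :=
  ((List.ofFn fun j => halfPow (Wop (Γ j)) (a j)).prod) ψ

/-- The X-basis vector `χ_y(σ) = 2^{−|ι|/2} (−1)^{∑_b σ(b)·y(b)}`. -/
def chi {ι : Type*} [Fintype ι] (y : ι → ZMod 2) : QubitSpace ι :=
  fun σ => (((Real.sqrt 2 ^ Fintype.card ι)⁻¹ : ℝ) : ℂ) *
    (-1 : ℂ) ^ (∑ b, (σ b).val * (y b).val)

/-- `r = ((∑_j a_j)/2) mod 2 ∈ ZMod 2`. -/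
def rOf {T : ℕ} (a : Fin T → ℕ) : ZMod 2 := (((∑ j, a j) / 2 : ℕ) : ZMod 2)

/-- The winning probability on input `a`:
`p(ψ, a) = ∑_{y : ∑_{b ∈ Γ̃} y b = r} |⟨χ_y, ψ'⟩|²`. -/
def winProb {ι : Type*} [Fintype ι] [DecidableEq ι] {T : ℕ}
    (Γ : Fin T → Finset ι) (Γt : Finset ι) (a : Fin T → ℕ)
    (ψ : QubitSpace ι) : ℝ :=
  ∑ y ∈ univ.filter (fun y : ι → ZMod 2 => ∑ b ∈ Γt, y b = rOf a),
    ‖qInner (chi y) (postState Γ a ψ)‖ ^ 2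

/-- The quantum winning probability: the average of `p(ψ, a)` over the
`2^{T−1}` valid inputs `a` (those with `∑_j a_j` even). -/
def quantumWinProb {ι : Type*} [Fintype ι] [DecidableEq ι] {T : ℕ}
    (Γ : Fin T → Finset ι) (Γt : Finset ι) (ψ : QubitSpace ι) : ℝ :=
  (∑ a ∈ univ.filter (fun a : Fin T → Fin 2 => Even (∑ j, (a j : ℕ))),
      winProb Γ Γt (fun j => (a j : ℕ)) ψ) / 2 ^ (T - 1)

/-- The computational basis vector `δ_σ`. -/
def deltaVec {ι : Type*} [DecidableEq (ι → ZMod 2)] (σ : ι → ZMod 2) :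
    QubitSpace ι :=
  fun τ => if τ = σ then 1 else 0

/-! ### The square lattice on the torus -/

variable (Lx Ly : ℕ)

/-- Vertices of the `L_x × L_y` square lattice on the torus. -/
abbrev Vertex := ZMod Lx × ZMod Ly

/-- Bonds of the lattice: `((x,y), 0)` is the horizontal bond from `(x,y)` to
`(x+1,y)`, and `((x,y), 1)` the vertical bond from `(x,y)` to `(x,y+1)`. -/
abbrev Bond := (ZMod Lx × ZMod Ly) × Fin 2

variable [NeZero Lx] [NeZero Ly]

/-- The vertical Wilson loop `Γ_x = {((x,y),1) : y}`. -/
def gammaV (x : ZMod Lx) : Finset (Bond Lx Ly) :=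
  univ.filter (fun b => b.1.1 = x ∧ b.2 = 1)

/-- The horizontal Wilson loop `Γ^h_y = {((x,y),0) : x}`. -/
def gammaH (y : ZMod Ly) : Finset (Bond Lx Ly) :=
  univ.filter (fun b => b.1.2 = y ∧ b.2 = 0)

/-- The horizontal dual loop `Γ̃_y = {((x,y),1) : x}`. -/
def dualH (y : ZMod Ly) : Finset (Bond Lx Ly) :=
  univ.filter (fun b => b.1.2 = y ∧ b.2 = 1)

/-- The vertical dual loop `Δ_x = {((x,y),0) : y}`. -/
def dualV (x : ZMod Lx) : Finset (Bond Lx Ly) :=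
  univ.filter (fun b => b.1.1 = x ∧ b.2 = 0)

/-- The plaquette `P(x,y) = {((x,y),0), ((x,y),1), ((x,y+1),0), ((x+1,y),1)}`. -/
def plaqSet (v : Vertex Lx Ly) : Finset (Bond Lx Ly) :=
  {(v, 0), (v, 1), ((v.1, v.2 + 1), 0), ((v.1 + 1, v.2), 1)}

/-- The star `S(x,y) = {((x,y),0), ((x,y),1), ((x−1,y),0), ((x,y−1),1)}`. -/
def starSet (v : Vertex Lx Ly) : Finset (Bond Lx Ly) :=
  {(v, 0), (v, 1), ((v.1 - 1, v.2), 0), ((v.1, v.2 - 1), 1)}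

/-- The plaquette operator `A_{(x,y)} = W_{P(x,y)}`. -/
def Aop (v : Vertex Lx Ly) : Module.End ℂ (QubitSpace (Bond Lx Ly)) :=
  Wop (plaqSet Lx Ly v)

/-- The star operator `B_{(x,y)} = V_{S(x,y)}`. -/
def Bop (v : Vertex Lx Ly) : Module.End ℂ (QubitSpace (Bond Lx Ly)) :=
  Vop (starSet Lx Ly v)

/-- The basis vector at the all-zeros configuration. -/
def delta0 : QubitSpace (Bond Lx Ly) := fun σ => if σ = 0 then 1 else 0

/-- The star projector `(1/2)(1 + B_v)`. -/
def starProj (v : Vertex Lx Ly) : Module.End ℂ (QubitSpace (Bond Lx Ly)) :=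
  ((2 : ℂ)⁻¹) • (1 + Bop Lx Ly v)

lemma vop_commute {ι : Type*} [DecidableEq ι] (S T : Finset ι) :
    Commute (Vop S) (Vop T) := by
  apply LinearMap.ext; intro ψ; funext σ
  simp only [Module.End.mul_apply]
  show ψ (σ + indicZ2 S + indicZ2 T) = ψ (σ + indicZ2 T + indicZ2 S)
  rw [add_right_comm]

lemma starProj_commute (v w : Vertex Lx Ly) :
    Commute (starProj Lx Ly v) (starProj Lx Ly w) := by
  have h : Commute (Bop Lx Ly v) (Bop Lx Ly w) := vop_commute _ _
  have h1 : Commute (1 + Bop Lx Ly v) (1 + Bop Lx Ly w) :=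
    (Commute.one_left _).add_left (((Commute.one_right _).add_right h))
  exact (h1.smul_left _).smul_right _

/-- The (unnormalized) zero-flux ground state
`Φ = (∏_v (1/2)(1 + B_v)) δ₀` (the star projectors commute, so the product
is well-defined). -/
def Phi : QubitSpace (Bond Lx Ly) :=
  (Finset.univ.noncommProd (fun v : Vertex Lx Ly => starProj Lx Ly v)
    (fun v _ w _ _ => starProj_commute Lx Ly v w)) (delta0 Lx Ly)

/-- The norm induced by the inner product. -/
def qNorm {ι : Type*} [Fintype ι] [DecidableEq ι] (ψ : QubitSpace ι) : ℝ :=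
  Real.sqrt (qInner ψ ψ).re

/-! Each of the sets `P(x,y)`, `Γ_x`, `Γ^h_y` meets every star in an even number of bonds, so
the corresponding `W_S` commutes with every `B_w`, hence with every star projector, and it fixes
`δ₀`; therefore it fixes `Φ`. The star `B_v` is absorbed by its own projector since `B_v² = 1`.
Finally every `V_T` merely permutes configurations, so the total amplitude `∑_σ ψ σ` is preserved
by the star projectors and equals `1` on `Φ`, whence `Φ ≠ 0`. -/

section Operators
variable {ι : Type*} [DecidableEq ι]

@[simp]
lemma wop_apply (S : Finset ι) (ψ : QubitSpace ι) (σ : ι → ZMod 2) :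
    Wop S ψ σ = (-1 : ℂ) ^ (∑ b ∈ S, σ b).val * ψ σ := rfl

@[simp]
lemma vop_apply (S : Finset ι) (ψ : QubitSpace ι) (σ : ι → ZMod 2) :
    Vop S ψ σ = ψ (σ + indicZ2 S) := rfl

lemma vop_mul_self (S : Finset ι) : Vop S * Vop S = 1 := by
  ext ψ σ
  simp [add_assoc, ZModModule.add_self]

lemma wop_commute_vop {S T : Finset ι} (h : ∑ b ∈ S, indicZ2 T b = 0) :
    Commute (Wop S) (Vop T) := by
  ext ψ σ
  simp [Finset.sum_add_distrib, h]

lemma sum_vop_apply [Fintype ι] (S : Finset ι) (ψ : QubitSpace ι) :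
    ∑ σ, Vop S ψ σ = ∑ σ, ψ σ :=
  Equiv.sum_comp (Equiv.addRight (indicZ2 S)) ψ

end Operators

section Lattice
variable {Lx Ly : ℕ}

lemma indicZ2_starSet_horizontal [Nontrivial (ZMod Lx)] (w p : Vertex Lx Ly) :
    indicZ2 (starSet Lx Ly w) (p, 0) = indicZ2 {w} p + indicZ2 {w} (p.1 + 1, p.2) := by
  have h1 : (1 : ZMod Lx) ≠ 0 := one_ne_zero
  simp only [indicZ2, starSet, Finset.mem_insert, Finset.mem_singleton, Prod.ext_iff]
  split_ifs <;> grind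

lemma indicZ2_starSet_vertical [Nontrivial (ZMod Ly)] (w p : Vertex Lx Ly) :
    indicZ2 (starSet Lx Ly w) (p, 1) = indicZ2 {w} p + indicZ2 {w} (p.1, p.2 + 1) := by
  have h1 : (1 : ZMod Ly) ≠ 0 := one_ne_zero
  simp only [indicZ2, starSet, Finset.mem_insert, Finset.mem_singleton, Prod.ext_iff]
  split_ifs <;> grind

lemma sum_gammaV [NeZero Lx] [NeZero Ly] {M : Type*} [AddCommMonoid M]
    (x : ZMod Lx) (f : Bond Lx Ly → M) :
    ∑ b ∈ gammaV Lx Ly x, f b = ∑ y, f ((x, y), 1) := by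
  simp only [gammaV, Finset.sum_filter, Fintype.sum_prod_type, Fin.sum_univ_two]
  rw [Fintype.sum_eq_single x (by simp_all)]
  simp

lemma sum_gammaH [NeZero Lx] [NeZero Ly] {M : Type*} [AddCommMonoid M]
    (y : ZMod Ly) (f : Bond Lx Ly → M) :
    ∑ b ∈ gammaH Lx Ly y, f b = ∑ x, f ((x, y), 0) := by
  simp only [gammaH, Finset.sum_filter, Fintype.sum_prod_type, Fin.sum_univ_two]
  rw [Finset.sum_comm, Fintype.sum_eq_single y (by simp_all)]
  simp

lemma sum_plaqSet [Nontrivial (ZMod Lx)] [Nontrivial (ZMod Ly)] {M : Type*} [AddCommMonoid M]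
    (v : Vertex Lx Ly) (f : Bond Lx Ly → M) :
    ∑ b ∈ plaqSet Lx Ly v, f b =
      f (v, 0) + f (v, 1) + f ((v.1, v.2 + 1), 0) + f ((v.1 + 1, v.2), 1) := by
  rw [plaqSet, Finset.sum_insert, Finset.sum_insert, Finset.sum_insert, Finset.sum_singleton]
  all_goals simp [Prod.ext_iff, add_assoc]

lemma sum_gammaV_indicZ2_starSet [NeZero Lx] [NeZero Ly] [Nontrivial (ZMod Ly)]
    (x : ZMod Lx) (w : Vertex Lx Ly) :
    ∑ b ∈ gammaV Lx Ly x, indicZ2 (starSet Lx Ly w) b = 0 := by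
  have shift : ∑ y, indicZ2 {w} (x, y + 1) = ∑ y, indicZ2 {w} (x, y) :=
    Equiv.sum_comp (Equiv.addRight 1) (fun y => indicZ2 {w} (x, y))
  simp only [sum_gammaV, indicZ2_starSet_vertical, Finset.sum_add_distrib, shift]
  exact ZModModule.add_self _

lemma sum_gammaH_indicZ2_starSet [NeZero Lx] [NeZero Ly] [Nontrivial (ZMod Lx)]
    (y : ZMod Ly) (w : Vertex Lx Ly) :
    ∑ b ∈ gammaH Lx Ly y, indicZ2 (starSet Lx Ly w) b = 0 := by
  have shift : ∑ x, indicZ2 {w} (x + 1, y) = ∑ x, indicZ2 {w} (x, y) :=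
    Equiv.sum_comp (Equiv.addRight 1) (fun x => indicZ2 {w} (x, y))
  simp only [sum_gammaH, indicZ2_starSet_horizontal, Finset.sum_add_distrib, shift]
  exact ZModModule.add_self _

lemma sum_plaqSet_indicZ2_starSet [Nontrivial (ZMod Lx)] [Nontrivial (ZMod Ly)]
    (v w : Vertex Lx Ly) :
    ∑ b ∈ plaqSet Lx Ly v, indicZ2 (starSet Lx Ly w) b = 0 := by
  simp only [sum_plaqSet, indicZ2_starSet_horizontal, indicZ2_starSet_vertical]
  -- each corner of the plaquette is an endpoint of exactly two of its bonds
  grind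

lemma bop_mul_starProj (v : Vertex Lx Ly) :
    Bop Lx Ly v * starProj Lx Ly v = starProj Lx Ly v := by
  rw [starProj, mul_smul_comm, mul_add, mul_one, Bop, vop_mul_self, add_comm]

end Lattice

section GroundState
variable {Lx Ly : ℕ} [NeZero Lx] [NeZero Ly]

lemma wop_apply_delta0 (S : Finset (Bond Lx Ly)) :
    Wop S (delta0 Lx Ly) = delta0 Lx Ly := by
  ext σ
  by_cases hσ : σ = 0 <;> simp [delta0, hσ]

lemma sum_starProj_apply (v : Vertex Lx Ly) (ψ : QubitSpace (Bond Lx Ly)) :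
    ∑ σ, starProj Lx Ly v ψ σ = ∑ σ, ψ σ := by
  simp only [starProj, LinearMap.smul_apply, LinearMap.add_apply, Module.End.one_apply,
    Pi.smul_apply, Pi.add_apply, smul_eq_mul, ← Finset.mul_sum, Finset.sum_add_distrib]
  rw [Bop, sum_vop_apply]
  ring

lemma wop_apply_phi {S : Finset (Bond Lx Ly)}
    (hS : ∀ w, ∑ b ∈ S, indicZ2 (starSet Lx Ly w) b = 0) :
    Wop S (Phi Lx Ly) = Phi Lx Ly := by
  have hcomm : Commute (Wop S) (univ.noncommProd (starProj Lx Ly)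
      (fun v _ w _ _ => starProj_commute Lx Ly v w)) :=
    Finset.noncommProd_commute _ _ _ _ fun w _ =>
      (((Commute.one_right _).add_right (wop_commute_vop (hS w))).smul_right _)
  rw [Phi, ← Module.End.mul_apply, hcomm.eq, Module.End.mul_apply, wop_apply_delta0]

lemma bop_apply_phi (v : Vertex Lx Ly) :
    Bop Lx Ly v (Phi Lx Ly) = Phi Lx Ly := by
  have hsplit : univ.noncommProd (starProj Lx Ly) (fun v _ w _ _ => starProj_commute Lx Ly v w) =
      starProj Lx Ly v * (univ.erase v).noncommProd (starProj Lx Ly)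
        (fun v _ w _ _ => starProj_commute Lx Ly v w) :=
    (Finset.mul_noncommProd_erase _ (Finset.mem_univ v) _ _).symm
  rw [Phi, hsplit, ← Module.End.mul_apply, ← mul_assoc, bop_mul_starProj]

lemma sum_phi : ∑ σ, Phi Lx Ly σ = 1 := by
  have hprod : ∀ ψ : QubitSpace (Bond Lx Ly),
      ∑ σ, univ.noncommProd (starProj Lx Ly) (fun v _ w _ _ => starProj_commute Lx Ly v w) ψ σ
        = ∑ σ, ψ σ :=
    Finset.noncommProd_induction _ _ _
      (fun L : Module.End ℂ (QubitSpace (Bond Lx Ly)) => ∀ ψ, ∑ σ, L ψ σ = ∑ σ, ψ σ)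
      (fun _ _ hL hM ψ => (hL _).trans (hM ψ)) (fun _ => rfl)
      (fun v _ => sum_starProj_apply v)
  rw [Phi, hprod]
  simp [delta0]

lemma phi_ne_zero : Phi Lx Ly ≠ 0 := by
  intro h
  simpa [h] using sum_phi (Lx := Lx) (Ly := Ly)

end GroundState

/-- the unnormalized zero-flux toric code ground state
`Φ = (∏_v (1/2)(1 + B_v)) δ₀` is nonzero, is fixed by every plaquette operator
`A_{(x,y)}`, every star operator `B_{(x,y)}`, every vertical Wilson loop
`W_{Γ_x}` and every horizontal Wilson loop `W_{Γ^h_y}`; in particular it is a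
ground state of the toric code Hamiltonian with trivial Wilson loop quantum
numbers. -/
theorem Phi_ground_state (Lx Ly : ℕ) [NeZero Lx] [NeZero Ly]
    (hLx : 2 ≤ Lx) (hLy : 2 ≤ Ly) :
    Phi Lx Ly ≠ 0 ∧
      (∀ v : Vertex Lx Ly, Aop Lx Ly v (Phi Lx Ly) = Phi Lx Ly) ∧
      (∀ v : Vertex Lx Ly, Bop Lx Ly v (Phi Lx Ly) = Phi Lx Ly) ∧
      (∀ x : ZMod Lx, Wop (gammaV Lx Ly x) (Phi Lx Ly) = Phi Lx Ly) ∧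
      (∀ y : ZMod Ly, Wop (gammaH Lx Ly y) (Phi Lx Ly) = Phi Lx Ly) := by
  have : Nontrivial (ZMod Lx) := ZMod.nontrivial_iff.2 (by omega)
  have : Nontrivial (ZMod Ly) := ZMod.nontrivial_iff.2 (by omega)
  exact ⟨phi_ne_zero, fun v => wop_apply_phi (sum_plaqSet_indicZ2_starSet v), bop_apply_phi,
    fun x => wop_apply_phi (sum_gammaV_indicZ2_starSet x),
    fun y => wop_apply_phi (sum_gammaH_indicZ2_starSet y)⟩
end
end

section
/- Let ι be a finite type, T ≥ 3, Γ_1, …, Γ_T ⊆ ι pairwise disjoint finsets, Γ̃ ⊆ ι a finset with |Γ_j ∩ Γ̃| = 1 for each j, ψ ∈ H a unit vector, and a : Fin T → {0,1} a valid input (∑_j a_j even). Then the winning probability on input a satisfies p(ψ, a) = (1/2)·( 1 + ∑_{σ : ι → ZMod 2} (−1)^{∑_j a_j·w_j(σ)} · ψ(σ) · conj(ψ(σ + 𝟙_{Γ̃})) ), where w_j(σ) ∈ {0,1} is the lift of ∑_{b∈Γ_j} σ b ∈ ZMod 2 and the exponent ∑_j a_j·w_j(σ) is computed in ℤ. (In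 particular the sum on the right-hand side is real.) -/
open Finset

noncomputable section

/-!
In the X basis the winning condition `∑_{b ∈ Γ̃} y_b = r` has indicator
`(1 + (-1)^r (-1)^{𝟙_Γ̃ ⬝ y}) / 2`, and character orthogonality on `(ZMod 2)^ι` gives
`∑_y (-1)^{u ⬝ y} |⟨χ_y, φ⟩|² = ∑_σ φ(σ) conj φ(σ + u)` (Parseval for `u = 0`). Hence
`p(ψ, a) = (‖ψ'‖² + (-1)^r ∑_σ ψ'(σ) conj ψ'(σ + 𝟙_Γ̃)) / 2`.

Each `W_{Γ_j}^{1/2}` multiplies by `i^{w_j(σ)}`, so `ψ'(σ) = i^{A(σ)} ψ(σ)` with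
`A(σ) = ∑_j a_j w_j(σ)`. Since `|Γ_j ∩ Γ̃| = 1`, flipping the bits in `Γ̃` flips every `w_j`,
so `A(σ) + A(σ + 𝟙_Γ̃) = ∑_j a_j = 2s`, and `(-1)^r = (-1)^s = i^{A(σ) + A(σ + 𝟙_Γ̃)}` turns the
cross phase `i^{A(σ)} conj i^{A(σ + 𝟙_Γ̃)}` into `(-1)^{A(σ)}`.
-/

open Matrix ComplexConjugate

lemma zmod_two_eq_zero_or_eq_one (z : ZMod 2) : z = 0 ∨ z = 1 := by
  revert z
  decide

def zsign (x : ZMod 2) : ℂ := (-1) ^ x.val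

lemma zsign_natCast (m : ℕ) : zsign m = (-1) ^ m := by
  rw [zsign, ZMod.val_natCast, ← neg_one_pow_eq_pow_mod_two]

lemma zsign_add (x y : ZMod 2) : zsign (x + y) = zsign x * zsign y := by
  rw [← ZMod.natCast_zmod_val x, ← ZMod.natCast_zmod_val y, ← Nat.cast_add, zsign_natCast,
    zsign_natCast, zsign_natCast, pow_add]

@[simp] lemma zsign_zero : zsign 0 = 1 := by simpa using zsign_natCast 0

@[simp] lemma zsign_one : zsign 1 = -1 := by simpa using zsign_natCast 1

@[simp] lemma conj_zsign (x : ZMod 2) : conj (zsign x) = zsign x := by simp [zsign]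

lemma ite_eq_half_one_add_zsign_mul (x r : ZMod 2) :
    (if x = r then 1 else 0 : ℂ) = (1 + zsign r * zsign x) / 2 := by
  rcases zmod_two_eq_zero_or_eq_one x with rfl | rfl <;>
    rcases zmod_two_eq_zero_or_eq_one r with rfl | rfl <;> norm_num

lemma sum_zsign_dotProduct {ι : Type*} [Fintype ι] [DecidableEq ι] (u : ι → ZMod 2) :
    ∑ y, zsign (u ⬝ᵥ y) = if u = 0 then (2 : ℂ) ^ Fintype.card ι else 0 := by
  split_ifs with hu
  · simp [hu]
  obtain ⟨b, hb⟩ := Function.ne_iff.mp hu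
  have hub : u b = 1 := (zmod_two_eq_zero_or_eq_one _).resolve_left hb
  -- translating `y` by `e_b` flips every sign
  have hflip := Equiv.sum_comp (Equiv.addRight (Pi.single b 1)) fun y => zsign (u ⬝ᵥ y)
  simp only [Equiv.coe_addRight, dotProduct_add, zsign_add, dotProduct_single, hub, mul_one,
    zsign_one, mul_neg_one, Finset.sum_neg_distrib] at hflip
  exact CharZero.eq_neg_self_iff.mp hflip.symm

section XBasis

variable {ι : Type*} [Fintype ι] [DecidableEq ι]

omit [DecidableEq ι] in
lemma chi_apply (y σ : ι → ZMod 2) :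
    chi y σ = (((Real.sqrt 2 ^ Fintype.card ι)⁻¹ : ℝ) : ℂ) * zsign (σ ⬝ᵥ y) := by
  rw [chi, ← zsign_natCast]
  push_cast [ZMod.natCast_zmod_val]
  rfl

lemma qInner_chi (y : ι → ZMod 2) (Φ : QubitSpace ι) :
    qInner (chi y) Φ
      = (((Real.sqrt 2 ^ Fintype.card ι)⁻¹ : ℝ) : ℂ) * ∑ σ, zsign (σ ⬝ᵥ y) * Φ σ := by
  simp only [qInner, chi_apply, map_mul, Complex.conj_ofReal, conj_zsign, Finset.mul_sum,
    mul_assoc]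

lemma sq_norm_qInner_chi (y : ι → ZMod 2) (Φ : QubitSpace ι) :
    ((‖qInner (chi y) Φ‖ ^ 2 : ℝ) : ℂ)
      = ((2 : ℂ) ^ Fintype.card ι)⁻¹ *
          ∑ σ, ∑ τ, zsign ((σ + τ) ⬝ᵥ y) * (Φ σ * conj (Φ τ)) := by
  have hc : (((Real.sqrt 2 ^ Fintype.card ι)⁻¹ : ℝ) : ℂ) ^ 2
      = ((2 : ℂ) ^ Fintype.card ι)⁻¹ := by
    rw [← Complex.ofReal_pow, inv_pow, ← pow_mul, mul_comm, pow_mul, Real.sq_sqrt zero_le_two]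
    push_cast; rfl
  rw [Complex.ofReal_pow, ← Complex.mul_conj', qInner_chi, map_mul, Complex.conj_ofReal,
    mul_mul_mul_comm, ← sq, hc, map_sum, Finset.sum_mul_sum]
  simp only [map_mul, conj_zsign, add_dotProduct, zsign_add]
  congr 1
  refine Finset.sum_congr rfl fun σ _ => Finset.sum_congr rfl fun τ _ => ?_
  ring

lemma sum_zsign_mul_sq_norm_qInner_chi (u : ι → ZMod 2) (Φ : QubitSpace ι) :
    ∑ y, zsign (u ⬝ᵥ y) * ((‖qInner (chi y) Φ‖ ^ 2 : ℝ) : ℂ) = ∑ σ, Φ σ * conj (Φ (σ + u)) := by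
  have hpair (σ τ : ι → ZMod 2) : σ + τ + u = 0 ↔ τ = σ + u := by
    have hneg : -(σ + u) = σ + u := funext fun b => ZMod.neg_eq_self_mod_two _
    rw [show σ + τ + u = τ + (σ + u) by abel, add_eq_zero_iff_eq_neg, hneg]
  calc ∑ y, zsign (u ⬝ᵥ y) * ((‖qInner (chi y) Φ‖ ^ 2 : ℝ) : ℂ)
      = ((2 : ℂ) ^ Fintype.card ι)⁻¹ * ∑ σ, ∑ τ,
          (∑ y, zsign ((σ + τ + u) ⬝ᵥ y)) * (Φ σ * conj (Φ τ)) := by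
        simp only [sq_norm_qInner_chi, Finset.mul_sum, Finset.sum_mul]
        rw [Finset.sum_comm]
        refine Finset.sum_congr rfl fun σ _ => ?_
        rw [Finset.sum_comm]
        refine Finset.sum_congr rfl fun τ _ => Finset.sum_congr rfl fun y _ => ?_
        simp only [add_dotProduct, zsign_add]
        ring
    _ = ∑ σ, Φ σ * conj (Φ (σ + u)) := by
        simp only [sum_zsign_dotProduct, hpair, ite_mul, zero_mul, Finset.sum_ite_eq',
          Finset.mem_univ, if_true, Finset.mul_sum,
          inv_mul_cancel_left₀ (pow_ne_zero _ (two_ne_zero (α := ℂ)))]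

end XBasis

section Phases

lemma sqrtInv_lmul_zsign {X : Type*} (g : X → ZMod 2) :
    sqrtInv (Algebra.lmul ℂ (X → ℂ) fun x => zsign (g x))
      = Algebra.lmul ℂ (X → ℂ) fun x => Complex.I ^ (g x).val := by
  rw [sqrtInv, ← map_one (Algebra.lmul ℂ (X → ℂ)), ← map_add, ← map_sub, ← map_smul, ← map_smul,
    ← map_add]
  congr 1
  funext x
  rcases zmod_two_eq_zero_or_eq_one (g x) with h | h <;>
    simp only [h, zsign, ZMod.val_zero, show (1 : ZMod 2).val = 1 from rfl, pow_zero, pow_one,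
      Pi.add_apply, Pi.sub_apply, Pi.smul_apply, Pi.one_apply, smul_eq_mul] <;> ring

lemma halfPow_lmul_zsign {X : Type*} (g : X → ZMod 2) {m : ℕ} (hm : m ≤ 1) :
    halfPow (Algebra.lmul ℂ (X → ℂ) fun x => zsign (g x)) m
      = Algebra.lmul ℂ (X → ℂ) fun x => Complex.I ^ (m * (g x).val) := by
  interval_cases m
  · simp only [halfPow, if_pos, zero_mul, pow_zero]
    exact (map_one _).symm
  · simp only [halfPow, one_ne_zero, if_false, one_mul]
    exact sqrtInv_lmul_zsign g

variable {ι : Type*} [DecidableEq ι]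

lemma Wop_eq_lmul (S : Finset ι) :
    Wop S = Algebra.lmul ℂ (QubitSpace ι) fun σ => zsign (∑ b ∈ S, σ b) :=
  rfl

lemma postState_apply {T : ℕ} (Γ : Fin T → Finset ι) {a : Fin T → ℕ} (ha : ∀ j, a j ≤ 1)
    (ψ : QubitSpace ι) (σ : ι → ZMod 2) :
    postState Γ a ψ σ = Complex.I ^ (∑ j, a j * (∑ b ∈ Γ j, σ b).val) * ψ σ := by
  let phase : Fin T → QubitSpace ι := fun j σ => Complex.I ^ (a j * (∑ b ∈ Γ j, σ b).val)
  have hprod := map_list_prod (Algebra.lmul ℂ (QubitSpace ι)) (List.ofFn phase)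
  rw [List.map_ofFn, List.prod_ofFn] at hprod
  simp only [postState, Wop_eq_lmul, halfPow_lmul_zsign _ (ha _)]
  change (List.ofFn (Algebra.lmul ℂ (QubitSpace ι) ∘ phase)).prod ψ σ = _
  rw [← hprod]
  simp [phase, Finset.prod_apply, Finset.prod_pow_eq_pow_sum]

end Phases

section WinProb

variable {ι : Type*} [Fintype ι] [DecidableEq ι]

omit [Fintype ι] in
lemma sum_indicZ2 (S Γt : Finset ι) : ∑ b ∈ S, indicZ2 Γt b = ((S ∩ Γt).card : ZMod 2) := by
  simp [indicZ2, Finset.sum_ite_mem]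

lemma sum_apply_eq_indicZ2_dotProduct (Γt : Finset ι) (y : ι → ZMod 2) :
    ∑ b ∈ Γt, y b = indicZ2 Γt ⬝ᵥ y := by
  simp [dotProduct, indicZ2, ite_mul, Finset.sum_ite_mem]

lemma winProb_eq {T : ℕ} (Γ : Fin T → Finset ι) (Γt : Finset ι) (a : Fin T → ℕ)
    (ψ : QubitSpace ι) :
    (winProb Γ Γt a ψ : ℂ)
      = (∑ σ, postState Γ a ψ σ * conj (postState Γ a ψ σ)
          + zsign (rOf a) *
              ∑ σ, postState Γ a ψ σ * conj (postState Γ a ψ (σ + indicZ2 Γt))) / 2 := by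
  have hsq := sum_zsign_mul_sq_norm_qInner_chi (0 : ι → ZMod 2) (postState Γ a ψ)
  simp only [zero_dotProduct, zsign_zero, one_mul, add_zero] at hsq
  rw [← hsq, ← sum_zsign_mul_sq_norm_qInner_chi, Finset.mul_sum, ← Finset.sum_add_distrib,
    Finset.sum_div, winProb, Complex.ofReal_sum, Finset.sum_filter]
  refine Finset.sum_congr rfl fun y _ => ?_
  rw [← boole_mul, sum_apply_eq_indicZ2_dotProduct, ite_eq_half_one_add_zsign_mul]
  ring

end WinProb

lemma I_pow_mul_conj_I_pow (m : ℕ) : Complex.I ^ m * conj (Complex.I ^ m) = 1 := by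
  rw [Complex.mul_conj, map_pow, Complex.normSq_I, one_pow, Complex.ofReal_one]

lemma neg_one_pow_mul_I_pow_mul_conj_I_pow {m m' s : ℕ} (h : m + m' = s + s) :
    (-1 : ℂ) ^ s * (Complex.I ^ m * conj (Complex.I ^ m')) = (-1) ^ m := by
  have hs : (-1 : ℂ) ^ s = Complex.I ^ m * Complex.I ^ m' := by
    rw [← pow_add, h, ← two_mul, pow_mul, Complex.I_sq]
  calc (-1 : ℂ) ^ s * (Complex.I ^ m * conj (Complex.I ^ m'))
      = (Complex.I * Complex.I) ^ m * (Complex.I ^ m' * conj (Complex.I ^ m')) := by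
        rw [hs, mul_pow]
        ring
    _ = (-1) ^ m := by rw [Complex.I_mul_I, I_pow_mul_conj_I_pow, mul_one]

lemma val_sum_add_val_sum_add_indicZ2 {ι : Type*} [DecidableEq ι] {S Γt : Finset ι}
    (h : (S ∩ Γt).card = 1) (σ : ι → ZMod 2) :
    (∑ b ∈ S, σ b).val + (∑ b ∈ S, (σ + indicZ2 Γt) b).val = 1 := by
  simp only [Pi.add_apply, Finset.sum_add_distrib, sum_indicZ2, h, Nat.cast_one]
  generalize ∑ b ∈ S, σ b = x
  revert x
  decide

theorem winProb_eq_diagonal_fidelity_general {ι : Type*} [Fintype ι] [DecidableEq ι]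
    (T : ℕ) (Γ : Fin T → Finset ι)
    (Γt : Finset ι) (hcap : ∀ j, (Γ j ∩ Γt).card = 1)
    (ψ : QubitSpace ι) (hψ : qInner ψ ψ = 1)
    (a : Fin T → ℕ) (ha : ∀ j, a j ≤ 1) (hae : Even (∑ j, a j)) :
    (winProb Γ Γt a ψ : ℂ)
      = (1 / 2) *
          (1 + ∑ σ : ι → ZMod 2,
            (-1 : ℂ) ^ (∑ j, a j * (∑ b ∈ Γ j, σ b).val) *
              (ψ σ * (starRingEnd ℂ) (ψ (σ + indicZ2 Γt)))) := by
  set A : (ι → ZMod 2) → ℕ := fun σ => ∑ j, a j * (∑ b ∈ Γ j, σ b).val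
  have hpost : ∀ σ, postState Γ a ψ σ = Complex.I ^ A σ * ψ σ := postState_apply Γ ha ψ
  obtain ⟨s, hs⟩ := hae
  have hflip (σ : ι → ZMod 2) : A σ + A (σ + indicZ2 Γt) = s + s := by
    simp only [A, ← hs, ← Finset.sum_add_distrib, ← mul_add,
      val_sum_add_val_sum_add_indicZ2 (hcap _), mul_one]
  have hr : zsign (rOf a) = (-1) ^ s := by
    rw [rOf, zsign_natCast, hs, ← two_mul, Nat.mul_div_cancel_left s two_pos]
  have hnorm : ∑ σ, postState Γ a ψ σ * conj (postState Γ a ψ σ) = 1 := by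
    rw [← hψ, qInner]
    refine Finset.sum_congr rfl fun σ _ => ?_
    rw [hpost, map_mul, mul_mul_mul_comm, I_pow_mul_conj_I_pow, one_mul, mul_comm]
  rw [winProb_eq, hnorm, hr, Finset.mul_sum, div_eq_inv_mul, one_div]
  congr 2
  refine Finset.sum_congr rfl fun σ _ => ?_
  rw [hpost, hpost, map_mul, ← neg_one_pow_mul_I_pow_mul_conj_I_pow (hflip σ)]
  ring

/-- for a unit vector `ψ` and a valid input `a` (each `a j ∈ {0,1}`
and `∑_j a_j` even), the winning probability on input `a` is
`p(ψ, a) = (1/2)(1 + ∑_σ (−1)^{∑_j a_j w_j(σ)} ψ(σ) conj(ψ(σ + 𝟙_{Γ̃})))`,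
where `w_j(σ)` is the lift of `∑_{b ∈ Γ_j} σ b ∈ ZMod 2`. In particular the sum
on the right-hand side is real. -/
theorem winProb_eq_diagonal_fidelity {ι : Type*} [Fintype ι] [DecidableEq ι]
    (T : ℕ) (hT : 3 ≤ T) (Γ : Fin T → Finset ι)
    (hdisj : ∀ j k, j ≠ k → Disjoint (Γ j) (Γ k))
    (Γt : Finset ι) (hcap : ∀ j, (Γ j ∩ Γt).card = 1)
    (ψ : QubitSpace ι) (hψ : qInner ψ ψ = 1)
    (a : Fin T → ℕ) (ha : ∀ j, a j ≤ 1) (hae : Even (∑ j, a j)) :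
    (winProb Γ Γt a ψ : ℂ)
      = (1 / 2) *
          (1 + ∑ σ : ι → ZMod 2,
            (-1 : ℂ) ^ (∑ j, a j * (∑ b ∈ Γ j, σ b).val) *
              (ψ σ * (starRingEnd ℂ) (ψ (σ + indicZ2 Γt)))) :=
  winProb_eq_diagonal_fidelity_general T Γ Γt hcap ψ hψ a ha hae
end
end
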